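/- arXiv:2408.13819 — 5 statements merged into one kernel-verified Lean document; each statement's English description precedes it below -/
import Mathlib

section
/- In the (b,c)-imbalance gadget, there exist b+c+1 pairwise arc-disjoint directed paths from w₀ to w_{b+1}. Consequently, for any set S of at most b arcs of the gadget, the vertices w₀ and w_{b+1} lie in the same strongly connected component of the gadget minus S. -/
open scoped Classical

def IsWalk {V E : Type} (src tgt : E → V) (A : Finset E) : List E → V → V → Prop
  | [], u, v => u = v
  | e :: l, u, v => e ∈ A ∧ src e = u ∧ IsWalk src tgt A l (tgt e) v

def Reach {V E : Type} (src tgt : E → V) (A : Finset E) (u v : V) : Prop :=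
  ∃ l, IsWalk src tgt A l u v

abbrev IG (b c : ℕ) : Type := Fin (b + 1) × (Fin (b + 1 + c) ⊕ Fin (b + 1))

def igSrc (b c : ℕ) : IG b c → Fin (b + 2)
  | (i, Sum.inl _) => i.castSucc
  | (i, Sum.inr _) => i.succ

def igTgt (b c : ℕ) : IG b c → Fin (b + 2)
  | (i, Sum.inl _) => i.succ
  | (i, Sum.inr _) => i.castSucc

lemma isWalk_append {V E : Type} (src tgt : E → V) (A : Finset E) :
    ∀ (l1 l2 : List E) (u v w : V), IsWalk src tgt A l1 u v → IsWalk src tgt A l2 v w →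
      IsWalk src tgt A (l1 ++ l2) u w := by
  intro l1
  induction l1 with
  | nil => intro l2 u v w h1 h2; cases h1; simpa using h2
  | cons e l ih =>
      intro l2 u v w h1 h2
      obtain ⟨he, hs, ht⟩ := h1
      exact ⟨he, hs, ih _ _ _ _ ht h2⟩

lemma reach_trans {V E : Type} (src tgt : E → V) (A : Finset E) {u v w : V}
    (h1 : Reach src tgt A u v) (h2 : Reach src tgt A v w) : Reach src tgt A u w := by
  obtain ⟨l1, h1⟩ := h1
  obtain ⟨l2, h2⟩ := h2
  exact ⟨l1 ++ l2, isWalk_append src tgt A l1 l2 u v w h1 h2⟩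

lemma fwdWalk (b c : ℕ) (j : Fin (b + 1 + c)) :
    ∀ (k n : ℕ) (hn : n + k = b + 1),
      IsWalk (igSrc b c) (igTgt b c) Finset.univ
        (((List.finRange (b + 1)).drop n).map (fun i => (i, Sum.inl j)))
        ⟨n, by omega⟩ (Fin.last (b + 1)) := by
  intro k
  induction k with
  | zero =>
      intro n hn
      have hn' : n = b + 1 := by omega
      subst hn'
      rw [List.drop_eq_nil_of_le (by simp)]
      simp [IsWalk, Fin.last, Fin.ext_iff]
  | succ k ih =>
      intro n hn
      have hlt : n < b + 1 := by omega
      rw [List.drop_eq_getElem_cons (by simpa using hlt)]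
      refine ⟨Finset.mem_univ _, ?_, ?_⟩
      · simp [igSrc, Fin.ext_iff]
      · have := ih (n + 1) (by omega)
        simpa [igTgt, Fin.ext_iff] using this

lemma bwdArcSrc (b c : ℕ) (n : ℕ) (hlt : n < b + 1) (j : Fin (b + 1)) :
    igSrc b c (⟨n, hlt⟩, Sum.inr j) = ⟨n + 1, by omega⟩ := by
  simp [igSrc, Fin.ext_iff]

/-- In the `(b,c)`-imbalance gadget there are `b+c+1` pairwise arc-disjoint directed
paths from `w₀` to `w_{b+1}`; consequently after deleting any set of at most `b` arcs,
`w₀` and `w_{b+1}` still lie in the same strongly connected component. -/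
theorem stmt6 (b c : ℕ) (hb : 0 < b) (hc : 0 < c) :
    (∃ P : Fin (b + c + 1) → List (IG b c),
      (∀ n, IsWalk (igSrc b c) (igTgt b c) Finset.univ (P n) 0 (Fin.last (b + 1)) ∧
        (P n).Nodup) ∧
      ∀ m n, m ≠ n → ∀ e, e ∈ P m → e ∉ P n) ∧
    ∀ S : Finset (IG b c), S.card ≤ b →
      Reach (igSrc b c) (igTgt b c) (Finset.univ \ S) 0 (Fin.last (b + 1)) ∧
      Reach (igSrc b c) (igTgt b c) (Finset.univ \ S) (Fin.last (b + 1)) 0 := by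
  have hcast : b + c + 1 = b + 1 + c := by omega
  constructor
  · refine ⟨fun k => (List.finRange (b + 1)).map
      (fun i => (i, Sum.inl (Fin.cast hcast k))), ?_, ?_⟩
    · intro n
      constructor
      · have := fwdWalk b c (Fin.cast hcast n) (b + 1) 0 (by omega)
        simpa using this
      · exact (List.nodup_finRange _).map (fun a b h => by
          simpa using congrArg Prod.fst h)
    · intro m n hmn e hem hen
      simp only [List.mem_map] at hem hen
      obtain ⟨i1, _, h1⟩ := hem
      obtain ⟨i2, _, h2⟩ := hen
      apply hmn
      have := h1.trans h2.symm
      have h3 : (Sum.inl (Fin.cast hcast m) : Fin (b+1+c) ⊕ Fin (b+1)) = Sum.inl (Fin.cast hcast n) := by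
        exact congrArg Prod.snd this
      have h4 : Fin.cast hcast m = Fin.cast hcast n := by simpa using h3
      exact Fin.ext (by simpa [Fin.ext_iff] using h4)
  · intro S hS
    set A := Finset.univ \ S with hA
    have fwd_arc : ∀ i : Fin (b + 1), ∃ j : Fin (b + 1 + c), (i, Sum.inl j) ∈ A := by
      intro i
      by_contra h
      push_neg at h
      have hsub : ∀ j : Fin (b + 1 + c), (i, (Sum.inl j : Fin (b+1+c) ⊕ Fin (b+1))) ∈ S := by
        intro j
        have := h j
        simp [hA] at this
        exact this
      have hinj : Function.Injective
          (fun j : Fin (b + 1 + c) => ((i, Sum.inl j) : IG b c)) := by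
        intro a b h; simpa using congrArg Prod.snd h
      have := Finset.card_le_card_of_injOn (s := Finset.univ)
        (fun j : Fin (b + 1 + c) => ((i, Sum.inl j) : IG b c))
        (fun j _ => hsub j) (hinj.injOn)
      simp at this
      omega
    have bwd_arc : ∀ i : Fin (b + 1), ∃ j : Fin (b + 1), (i, Sum.inr j) ∈ A := by
      intro i
      by_contra h
      push_neg at h
      have hsub : ∀ j : Fin (b + 1), (i, (Sum.inr j : Fin (b+1+c) ⊕ Fin (b+1))) ∈ S := by
        intro j
        have := h j
        simp [hA] at this
        exact this
      have hinj : Function.Injective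
          (fun j : Fin (b + 1) => ((i, Sum.inr j) : IG b c)) := by
        intro a b h; simpa using congrArg Prod.snd h
      have := Finset.card_le_card_of_injOn (s := Finset.univ)
        (fun j : Fin (b + 1) => ((i, Sum.inr j) : IG b c))
        (fun j _ => hsub j) (hinj.injOn)
      simp at this
      omega
    have fwd : ∀ (n : ℕ) (hn : n ≤ b + 1),
        Reach (igSrc b c) (igTgt b c) A 0 ⟨n, by omega⟩ := by
      intro n
      induction n with
      | zero => intro _; exact ⟨[], by simp [IsWalk, Fin.ext_iff]⟩
      | succ n ih =>
          intro hn
          have hlt : n < b + 1 := by omega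
          obtain ⟨j, hj⟩ := fwd_arc ⟨n, hlt⟩
          refine reach_trans _ _ _ (ih (by omega)) ⟨[(⟨n, hlt⟩, Sum.inl j)], ?_⟩
          exact ⟨hj, by simp [igSrc, Fin.ext_iff], by simp [IsWalk, igTgt, Fin.ext_iff]⟩
    have bwd : ∀ (n : ℕ) (hn : n ≤ b + 1),
        Reach (igSrc b c) (igTgt b c) A ⟨n, by omega⟩ 0 := by
      intro n
      induction n with
      | zero => intro _; exact ⟨[], by simp [IsWalk, Fin.ext_iff]⟩
      | succ n ih =>
          intro hn
          have hlt : n < b + 1 := by omega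
          obtain ⟨j, hj⟩ := bwd_arc ⟨n, hlt⟩
          refine reach_trans _ _ _ ⟨[(⟨n, hlt⟩, Sum.inr j)], ?_⟩ (ih (by omega))
          exact ⟨hj, by simp [igSrc, Fin.ext_iff], by simp [IsWalk, igTgt, Fin.ext_iff]⟩
    have hlast : (Fin.last (b + 1) : Fin (b + 2)) = ⟨b + 1, by omega⟩ := rfl
    exact ⟨hlast ▸ fwd (b + 1) le_rfl, hlast ▸ bwd (b + 1) le_rfl⟩
end

section
/- Let G be a directed multigraph and let G' be obtained from G by subdividing every arc once. Then for every nonnegative integer k: there exists a set S of at most k arcs of G such that every strongly connected component of G − S is Eulerian, if and only if there exists a set S' of at most k arcs of G' such that every strongly connected component of G' − S' is Eulerian. -/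
open scoped Classical

/-- Every strongly connected component of the digraph with arc set `A` is Eulerian. -/
def BalancedSCC {V E : Type} (src tgt : E → V) (A : Finset E) : Prop :=
  ∀ v : V, (A.filter fun e => src e = v ∧ Reach src tgt A (tgt e) v).card =
    (A.filter fun e => tgt e = v ∧ Reach src tgt A v (src e)).card

/-- Arc-endpoint maps of the subdivision of the digraph `(src, tgt)`. -/
def sdSrc {V E : Type} (src : E → V) (tgt : E → V) : E × Bool → V ⊕ E
  | (e, false) => Sum.inl (src e)
  | (e, true) => Sum.inr e

def sdTgt {V E : Type} (src : E → V) (tgt : E → V) : E × Bool → V ⊕ E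
  | (e, false) => Sum.inr e
  | (e, true) => Sum.inl (tgt e)

namespace Sd10

variable {V E : Type} [Fintype E]

/-- projection of a subdivision deletion set to the original graph -/
noncomputable def dS (S' : Finset (E × Bool)) : Finset E :=
  Finset.univ.filter fun e => (e, false) ∈ S' ∨ (e, true) ∈ S'

lemma card_dS_le (S' : Finset (E × Bool)) : (dS S').card ≤ S'.card := by
  apply Finset.card_le_card_of_injOn
    (fun e => if (e, false) ∈ S' then (e, false) else (e, true))
  · intro e he
    simp only [Finset.mem_coe] at he ⊢
    simp only [dS, Finset.mem_filter, Finset.mem_univ, true_and] at he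
    split_ifs with h
    · exact h
    · exact he.resolve_left h
  · intro a _ b _ h
    dsimp only at h
    split_ifs at h <;> exact congrArg Prod.fst h

variable (src tgt : E → V) (S' : Finset (E × Bool))

lemma isWalk_append {V' E' : Type} (src' tgt' : E' → V') {A : Finset E'} :
    ∀ (l : List E') {l' : List E'} {u v w : V'},
    IsWalk src' tgt' A l u v → IsWalk src' tgt' A l' v w →
    IsWalk src' tgt' A (l ++ l') u w := by
  intro l
  induction l with
  | nil =>
    intro l' u v w h h'
    have : u = v := h
    subst this
    simpa using h'
  | cons e t ih =>
    intro l' u v w h h'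
    obtain ⟨he, hs, hw⟩ := h
    exact ⟨he, hs, ih hw h'⟩

lemma walk_to_inl :
    ∀ (l : List (E × Bool)) (x : V ⊕ E) (v : V),
    IsWalk (sdSrc src tgt) (sdTgt src tgt) (Finset.univ \ S') l x (Sum.inl v) →
    ((∀ u, x = Sum.inl u → Reach src tgt (Finset.univ \ dS S') u v) ∧
     (∀ e, x = Sum.inr e →
       (e, true) ∉ S' ∧ Reach src tgt (Finset.univ \ dS S') (tgt e) v)) := by
  intro l
  induction l with
  | nil =>
    intro x v h
    have hx : x = Sum.inl v := h
    constructor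
    · rintro u rfl
      cases hx
      exact ⟨[], rfl⟩
    · rintro e rfl
      simp at hx
  | cons a t ih =>
    intro x v h
    obtain ⟨ha, hsrc, hw⟩ := h
    constructor
    · rintro u rfl
      obtain ⟨e, b⟩ := a
      cases b
      · have hu : src e = u := by
          simpa [sdSrc] using hsrc
        have h2 := (ih (sdTgt src tgt (e, false)) v hw).2 e (by simp [sdTgt])
        obtain ⟨ht, hr⟩ := h2
        have hf : (e, false) ∉ S' := (Finset.mem_sdiff.mp ha).2
        have heA : e ∈ Finset.univ \ dS S' := by
          simp [dS, ht, hf]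
        obtain ⟨l', hl'⟩ := hr
        exact ⟨e :: l', heA, hu, hl'⟩
      · simp [sdSrc] at hsrc
    · rintro e rfl
      obtain ⟨f, b⟩ := a
      cases b
      · simp [sdSrc] at hsrc
      · have hf : f = e := by simpa [sdSrc] using hsrc
        subst hf
        refine ⟨(Finset.mem_sdiff.mp ha).2, ?_⟩
        exact (ih (sdTgt src tgt (f, true)) v hw).1 (tgt f) (by simp [sdTgt])

lemma walk_to_inr :
    ∀ (l : List (E × Bool)) (x : V ⊕ E) (f : E),
    IsWalk (sdSrc src tgt) (sdTgt src tgt) (Finset.univ \ S') l x (Sum.inr f) →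
    ((∀ u, x = Sum.inl u →
       (f, false) ∉ S' ∧ Reach src tgt (Finset.univ \ dS S') u (src f)) ∧
     (∀ e, x = Sum.inr e →
       (e = f ∨ ((e, true) ∉ S' ∧ (f, false) ∉ S' ∧
         Reach src tgt (Finset.univ \ dS S') (tgt e) (src f))))) := by
  intro l
  induction l with
  | nil =>
    intro x f h
    have hx : x = Sum.inr f := h
    constructor
    · rintro u rfl
      simp at hx
    · rintro e rfl
      exact Or.inl (by simpa using hx)
  | cons a t ih =>
    intro x f h
    obtain ⟨ha, hsrc, hw⟩ := h
    constructor
    · rintro u rfl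
      obtain ⟨e, b⟩ := a
      cases b
      · have hu : src e = u := by simpa [sdSrc] using hsrc
        have hf0 : (e, false) ∉ S' := (Finset.mem_sdiff.mp ha).2
        have h2 := (ih (sdTgt src tgt (e, false)) f hw).2 e (by simp [sdTgt])
        rcases h2 with rfl | ⟨ht, hff, hr⟩
        · exact ⟨hf0, ⟨[], hu.symm⟩⟩
        · have heA : e ∈ Finset.univ \ dS S' := by simp [dS, ht, hf0]
          obtain ⟨l', hl'⟩ := hr
          exact ⟨hff, ⟨e :: l', heA, hu, hl'⟩⟩
      · simp [sdSrc] at hsrc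
    · rintro e rfl
      obtain ⟨g, b⟩ := a
      cases b
      · simp [sdSrc] at hsrc
      · have hg : g = e := by simpa [sdSrc] using hsrc
        subst hg
        have ht : (g, true) ∉ S' := (Finset.mem_sdiff.mp ha).2
        have h1 := (ih (sdTgt src tgt (g, true)) f hw).1 (tgt g) (by simp [sdTgt])
        exact Or.inr ⟨ht, h1.1, h1.2⟩

lemma lift_walk :
    ∀ (l : List E) (u v : V), IsWalk src tgt (Finset.univ \ dS S') l u v →
    Reach (sdSrc src tgt) (sdTgt src tgt) (Finset.univ \ S') (Sum.inl u) (Sum.inl v) := by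
  intro l
  induction l with
  | nil =>
    intro u v h
    have : u = v := h
    subst this
    exact ⟨[], rfl⟩
  | cons e t ih =>
    intro u v h
    obtain ⟨he, hsrc, hw⟩ := h
    obtain ⟨l', hl'⟩ := ih (tgt e) v hw
    have he' : (e, false) ∉ S' ∧ (e, true) ∉ S' := by
      have := (Finset.mem_sdiff.mp he).2
      simp [dS] at this
      exact this
    refine ⟨(e, false) :: (e, true) :: l', ?_, ?_, ?_, ?_, ?_⟩
    · simp [he'.1]
    · simp [sdSrc, hsrc]
    · simp [he'.2]
    · rfl
    · exact hl'

lemma lift_reach {u v : V} (h : Reach src tgt (Finset.univ \ dS S') u v) :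
    Reach (sdSrc src tgt) (sdTgt src tgt) (Finset.univ \ S') (Sum.inl u) (Sum.inl v) := by
  obtain ⟨l, hl⟩ := h
  exact lift_walk src tgt S' l u v hl

lemma reach_inl_inl {u v : V} :
    Reach (sdSrc src tgt) (sdTgt src tgt) (Finset.univ \ S') (Sum.inl u) (Sum.inl v) ↔
      Reach src tgt (Finset.univ \ dS S') u v := by
  constructor
  · rintro ⟨l, hl⟩
    exact (walk_to_inl src tgt S' l _ v hl).1 u rfl
  · exact lift_reach src tgt S'

lemma reach_inr_inl {e : E} {v : V} :
    Reach (sdSrc src tgt) (sdTgt src tgt) (Finset.univ \ S') (Sum.inr e) (Sum.inl v) ↔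
      ((e, true) ∉ S' ∧ Reach src tgt (Finset.univ \ dS S') (tgt e) v) := by
  constructor
  · rintro ⟨l, hl⟩
    exact (walk_to_inl src tgt S' l _ v hl).2 e rfl
  · rintro ⟨ht, hr⟩
    obtain ⟨l, hl⟩ := lift_reach src tgt S' hr
    exact ⟨(e, true) :: l, by simp [ht], rfl, hl⟩

lemma reach_inl_inr {e : E} {v : V} :
    Reach (sdSrc src tgt) (sdTgt src tgt) (Finset.univ \ S') (Sum.inl v) (Sum.inr e) ↔
      ((e, false) ∉ S' ∧ Reach src tgt (Finset.univ \ dS S') v (src e)) := by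
  constructor
  · rintro ⟨l, hl⟩
    exact (walk_to_inr src tgt S' l _ e hl).1 v rfl
  · rintro ⟨hf, hr⟩
    obtain ⟨l, hl⟩ := lift_reach src tgt S' hr
    refine ⟨l ++ [(e, false)], isWalk_append _ _ l hl ?_⟩
    exact ⟨by simp [hf], rfl, rfl⟩

lemma count_out (v : V)
    {inst1 : DecidablePred fun a : E × Bool => sdSrc src tgt a = Sum.inl v ∧
      Reach (sdSrc src tgt) (sdTgt src tgt) (Finset.univ \ S') (sdTgt src tgt a) (Sum.inl v)}
    {inst2 : DecidablePred fun e : E => src e = v ∧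
      Reach src tgt (Finset.univ \ dS S') (tgt e) v} :
    (@Finset.filter _ _ inst1 (Finset.univ \ S')).card =
      (@Finset.filter _ _ inst2 (Finset.univ \ dS S')).card := by
  have himg : @Finset.filter _ _ inst1 (Finset.univ \ S') =
      (@Finset.filter _ _ inst2 (Finset.univ \ dS S')).image (fun e => (e, false)) := by
    ext ⟨e, b⟩
    cases b
    · rw [Finset.mem_filter]
      simp only [Finset.mem_filter, Finset.mem_sdiff, Finset.mem_univ, true_and,
        Finset.mem_image, sdSrc, sdTgt, Sum.inl.injEq, Prod.mk.injEq, and_true]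
      rw [reach_inr_inl src tgt S']
      constructor
      · rintro ⟨hf, hsv, ht, hr⟩
        exact ⟨e, ⟨by simp [dS, hf, ht], hsv, hr⟩, rfl⟩
      · rintro ⟨x, ⟨hx, hsv, hr⟩, rfl⟩
        simp [dS] at hx
        exact ⟨hx.1, hsv, hx.2, hr⟩
    · rw [Finset.mem_filter]; simp [sdSrc]
  rw [himg, Finset.card_image_of_injective _ (fun a b h => congrArg Prod.fst h)]

lemma count_in (v : V)
    {inst1 : DecidablePred fun a : E × Bool => sdTgt src tgt a = Sum.inl v ∧
      Reach (sdSrc src tgt) (sdTgt src tgt) (Finset.univ \ S') (Sum.inl v) (sdSrc src tgt a)}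
    {inst2 : DecidablePred fun e : E => tgt e = v ∧
      Reach src tgt (Finset.univ \ dS S') v (src e)} :
    (@Finset.filter _ _ inst1 (Finset.univ \ S')).card =
      (@Finset.filter _ _ inst2 (Finset.univ \ dS S')).card := by
  have himg : @Finset.filter _ _ inst1 (Finset.univ \ S') =
      (@Finset.filter _ _ inst2 (Finset.univ \ dS S')).image (fun e => (e, true)) := by
    ext ⟨e, b⟩
    cases b
    · rw [Finset.mem_filter]; simp [sdTgt]
    · rw [Finset.mem_filter]
      simp only [Finset.mem_filter, Finset.mem_sdiff, Finset.mem_univ, true_and,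
        Finset.mem_image, sdSrc, sdTgt, Sum.inl.injEq, Prod.mk.injEq, and_true]
      rw [reach_inl_inr src tgt S']
      constructor
      · rintro ⟨ht, htv, hf, hr⟩
        exact ⟨e, ⟨by simp [dS, hf, ht], htv, hr⟩, rfl⟩
      · rintro ⟨x, ⟨hx, htv, hr⟩, rfl⟩
        simp [dS] at hx
        exact ⟨hx.2, htv, hx.1, hr⟩
  rw [himg, Finset.card_image_of_injective _ (fun a b h => congrArg Prod.fst h)]

lemma count_inr (f : E)
    {inst1 : DecidablePred fun a : E × Bool => sdSrc src tgt a = Sum.inr f ∧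
      Reach (sdSrc src tgt) (sdTgt src tgt) (Finset.univ \ S') (sdTgt src tgt a) (Sum.inr f)}
    {inst2 : DecidablePred fun a : E × Bool => sdTgt src tgt a = Sum.inr f ∧
      Reach (sdSrc src tgt) (sdTgt src tgt) (Finset.univ \ S') (Sum.inr f) (sdSrc src tgt a)} :
    (@Finset.filter _ _ inst1 (Finset.univ \ S')).card =
      (@Finset.filter _ _ inst2 (Finset.univ \ S')).card := by
  set C : Prop := (f, true) ∉ S' ∧ (f, false) ∉ S' ∧
    Reach src tgt (Finset.univ \ dS S') (tgt f) (src f) with hC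
  have h1 : @Finset.filter _ _ inst1 (Finset.univ \ S') =
      if C then {(f, true)} else ∅ := by
    ext ⟨e, b⟩
    cases b
    · split_ifs <;> rw [Finset.mem_filter] <;> simp [Finset.mem_filter, sdSrc]
    · rcases eq_or_ne e f with rfl | hne
      · constructor
        · intro h
          obtain ⟨hmem, -, hr⟩ := Finset.mem_filter.mp h
          rw [show sdTgt src tgt (e, true) = Sum.inl (tgt e) from rfl,
            reach_inl_inr src tgt S'] at hr
          rw [if_pos ⟨(Finset.mem_sdiff.mp hmem).2, hr.1, hr.2⟩]
          exact Finset.mem_singleton_self _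
        · intro h
          split_ifs at h with hc
          · refine Finset.mem_filter.mpr ⟨by simp [hc.1], rfl, ?_⟩
            rw [show sdTgt src tgt (e, true) = Sum.inl (tgt e) from rfl,
              reach_inl_inr src tgt S']
            exact ⟨hc.2.1, hc.2.2⟩
          · simp at h
      · split_ifs <;> rw [Finset.mem_filter] <;> simp [Finset.mem_filter, sdSrc, hne]
  have h2 : @Finset.filter _ _ inst2 (Finset.univ \ S') =
      if C then {(f, false)} else ∅ := by
    ext ⟨e, b⟩
    cases b
    · rcases eq_or_ne e f with rfl | hne
      · constructor
        · intro h
          obtain ⟨hmem, -, hr⟩ := Finset.mem_filter.mp h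
          rw [show sdSrc src tgt (e, false) = Sum.inl (src e) from rfl,
            reach_inr_inl src tgt S'] at hr
          rw [if_pos ⟨hr.1, (Finset.mem_sdiff.mp hmem).2, hr.2⟩]
          exact Finset.mem_singleton_self _
        · intro h
          split_ifs at h with hc
          · refine Finset.mem_filter.mpr ⟨by simp [hc.2.1], rfl, ?_⟩
            rw [show sdSrc src tgt (e, false) = Sum.inl (src e) from rfl,
              reach_inr_inl src tgt S']
            exact ⟨hc.1, hc.2.2⟩
          · simp at h
      · split_ifs <;> rw [Finset.mem_filter] <;> simp [Finset.mem_filter, sdTgt, hne]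
    · split_ifs <;> rw [Finset.mem_filter] <;> simp [Finset.mem_filter, sdTgt]
  rw [h1, h2]
  split_ifs <;> rfl

end Sd10

open Sd10 in
/-- `G` has an ESCAD solution of size at most `k` iff its subdivision does. -/
theorem stmt10 {V E : Type} [Fintype E] (src tgt : E → V) (k : ℕ) :
    (∃ S : Finset E, S.card ≤ k ∧ BalancedSCC src tgt (Finset.univ \ S)) ↔
    (∃ S' : Finset (E × Bool), S'.card ≤ k ∧
      BalancedSCC (sdSrc src tgt) (sdTgt src tgt) (Finset.univ \ S')) := by
  constructor
  · rintro ⟨S, hk, hbal⟩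
    refine ⟨S.image fun e => (e, false), Finset.card_image_le.trans hk, ?_⟩
    set S' : Finset (E × Bool) := S.image fun e => (e, false) with hS'
    have hdS : dS S' = S := by
      ext e
      simp [dS, hS']
    intro x
    cases x with
    | inl v =>
      have hb := hbal v
      rw [← hdS] at hb
      exact (count_out src tgt S' v).trans (hb.trans (count_in src tgt S' v).symm)
    | inr f =>
      exact count_inr src tgt S' f
  · rintro ⟨S', hk, hbal⟩
    refine ⟨dS S', (card_dS_le S').trans hk, ?_⟩
    intro v
    have h := hbal (Sum.inl v)
    exact (count_out src tgt S' v).symm.trans (h.trans (count_in src tgt S' v))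
end

section
/- Let G be a cubic (3-regular) undirected graph and construct the directed multigraph G' with vertex set V(G) × {0,1}, one arc ((u,0),(u,1)) for each u ∈ V(G), and two parallel arcs ((u,1),(v,0)) and two parallel arcs ((v,1),(u,0)) for each edge uv ∈ E(G). Then G has a vertex cover of size at most k if and only if there exists a set S of at most k arcs of G' such that every strongly connected component of G' − S is Eulerian. -/
open scoped Classical
set_option linter.unusedSectionVars false

/-- Arcs of the digraph `G'` built from `G`: an internal arc `((u,0),(u,1))` for each
vertex `u`, and two parallel cross arcs `((u,1),(v,0))` for each ordered adjacent pair. -/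
abbrev CE {V : Type} (G : SimpleGraph V) : Type :=
  V ⊕ ({p : V × V // G.Adj p.1 p.2} × Bool)

def cSrc {V : Type} (G : SimpleGraph V) : CE G → V × Bool
  | Sum.inl u => (u, false)
  | Sum.inr (p, _) => (p.1.1, true)

def cTgt {V : Type} (G : SimpleGraph V) : CE G → V × Bool
  | Sum.inl u => (u, true)
  | Sum.inr (p, _) => (p.1.2, false)

lemma walk_append {V E : Type} {src tgt : E → V} {A : Finset E} :
    ∀ {l l' : List E} {u v w : V}, IsWalk src tgt A l u v → IsWalk src tgt A l' v w →
      IsWalk src tgt A (l ++ l') u w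
  | [], l', u, v, w, h, h' => by
      simp only [IsWalk] at h; subst h; exact h'
  | e :: l, l', u, v, w, h, h' => ⟨h.1, h.2.1, walk_append h.2.2 h'⟩

section Dir1
variable {V : Type} [Fintype V] [DecidableEq V] {G : SimpleGraph V} [DecidableRel G.Adj]

lemma no4 {X : Finset V} (hcov : ∀ u v, G.Adj u v → u ∈ X ∨ v ∈ X)
    {A : Finset (CE G)} (hA : ∀ w : V, Sum.inl w ∈ A → w ∉ X) :
    ∀ (e1 e2 e3 e4 : CE G) (rest : List (CE G)) (u v : V × Bool),
      ¬ IsWalk (cSrc G) (cTgt G) A (e1 :: e2 :: e3 :: e4 :: rest) u v := by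
  intro e1 e2 e3 e4 rest u v h
  obtain ⟨h1, hs1, h2, hs2, h3, hs3, h4, hs4, -⟩ := h
  rcases e1 with a | ⟨⟨⟨x, y⟩, hxy⟩, b1⟩
  · rcases e2 with b | ⟨⟨⟨x2, y2⟩, hxy2⟩, b2⟩
    · simp [cSrc, cTgt] at hs2
    · simp only [cSrc, cTgt, Prod.mk.injEq] at hs2
      rcases e3 with c | ⟨⟨⟨x3, y3⟩, hxy3⟩, b3⟩
      · simp only [cSrc, cTgt, Prod.mk.injEq] at hs3
        rcases hcov x2 y2 hxy2 with hh | hh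
        · exact hA a h1 (hs2.1 ▸ hh)
        · exact hA c h3 (hs3.1 ▸ hh)
      · simp [cSrc, cTgt] at hs3
  · rcases e2 with b | ⟨⟨⟨x2, y2⟩, hxy2⟩, b2⟩
    · simp only [cSrc, cTgt, Prod.mk.injEq] at hs2
      rcases e3 with c | ⟨⟨⟨x3, y3⟩, hxy3⟩, b3⟩
      · simp [cSrc, cTgt] at hs3
      · simp only [cSrc, cTgt, Prod.mk.injEq] at hs3
        rcases e4 with d | ⟨⟨⟨x4, y4⟩, hxy4⟩, b4⟩
        · simp only [cSrc, cTgt, Prod.mk.injEq] at hs4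
          rcases hcov x3 y3 hxy3 with hh | hh
          · exact hA b h2 (hs3.1 ▸ hh)
          · exact hA d h4 (hs4.1 ▸ hh)
        · simp [cSrc, cTgt] at hs4
    · simp [cSrc, cTgt] at hs2

lemma len_le {X : Finset V} (hcov : ∀ u v, G.Adj u v → u ∈ X ∨ v ∈ X)
    {A : Finset (CE G)} (hA : ∀ w : V, Sum.inl w ∈ A → w ∉ X) :
    ∀ (l : List (CE G)) (u v : V × Bool),
      IsWalk (cSrc G) (cTgt G) A l u v → l.length ≤ 3 := by
  intro l u v h
  match l with
  | [] => simp
  | [_] => simp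
  | [_, _] => simp
  | [_, _, _] => simp
  | e1 :: e2 :: e3 :: e4 :: rest => exact absurd h (no4 hcov hA e1 e2 e3 e4 rest u v)

lemma no_closed {X : Finset V} (hcov : ∀ u v, G.Adj u v → u ∈ X ∨ v ∈ X)
    {A : Finset (CE G)} (hA : ∀ w : V, Sum.inl w ∈ A → w ∉ X)
    {c : List (CE G)} {p : V × Bool} (hc : IsWalk (cSrc G) (cTgt G) A c p p)
    (hne : c ≠ []) : False := by
  have h4 : IsWalk (cSrc G) (cTgt G) A (c ++ (c ++ (c ++ c))) p p :=
    walk_append hc (walk_append hc (walk_append hc hc))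
  have hlen := len_le hcov hA _ _ _ h4
  have h1 : 1 ≤ c.length := by
    cases c with
    | nil => exact absurd rfl hne
    | cons a l => simp
  simp only [List.length_append] at hlen
  omega
end Dir1

/-- A cubic graph `G` has a vertex cover of size at most `k` iff the digraph `G'` has a
set of at most `k` arcs whose deletion makes every strongly connected component
Eulerian. -/
theorem stmt12 {V : Type} [Fintype V] [DecidableEq V] (G : SimpleGraph V)
    [DecidableRel G.Adj] (hcubic : ∀ v, G.degree v = 3) (k : ℕ) :
    (∃ X : Finset V, X.card ≤ k ∧ ∀ u v, G.Adj u v → u ∈ X ∨ v ∈ X) ↔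
    (∃ S : Finset (CE G), S.card ≤ k ∧
      BalancedSCC (cSrc G) (cTgt G) (Finset.univ \ S)) := by
  constructor
  · rintro ⟨X, hXk, hcov⟩
    refine ⟨X.image (Sum.inl : V → CE G), ?_, ?_⟩
    · calc (X.image (Sum.inl : V → CE G)).card ≤ X.card := Finset.card_image_le
        _ ≤ k := hXk
    · set A : Finset (CE G) := Finset.univ \ X.image (Sum.inl : V → CE G) with hAdef
      have hA : ∀ w : V, Sum.inl w ∈ A → w ∉ X := by
        intro w hw hwX
        simp only [hAdef, Finset.mem_sdiff, Finset.mem_image] at hw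
        exact hw.2 ⟨w, hwX, rfl⟩
      intro p
      have hzero : ∀ (P : CE G → Prop) (inst : DecidablePred P),
          (∀ e ∈ A, ¬ P e) → (A.filter P).card = 0 := by
        intro P inst h
        rw [Finset.card_eq_zero, Finset.filter_eq_empty_iff]
        exact h
      rw [hzero _ _ ?_, hzero _ _ ?_]
      · rintro e he ⟨htgt, l, hl⟩
        have : IsWalk (cSrc G) (cTgt G) A (l ++ [e]) p p := by
          refine walk_append hl ⟨he, rfl, ?_⟩
          simp only [IsWalk]; exact htgt
        exact no_closed hcov hA this (by simp)
      · rintro e he ⟨hsrc, l, hl⟩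
        exact no_closed hcov hA (c := e :: l) (p := p)
          ⟨he, hsrc, hl⟩ (by simp)
  · rintro ⟨S, hSk, hbal⟩
    set A : Finset (CE G) := Finset.univ \ S with hAdef
    set f : CE G → V := fun e => match e with
      | Sum.inl u => u
      | Sum.inr (p, _) => p.1.1 with hfdef
    refine ⟨S.image f, le_trans Finset.card_image_le hSk, ?_⟩
    intro u v huv
    by_contra hno
    push_neg at hno
    obtain ⟨hu, hv⟩ := hno
    have hmem : ∀ e : CE G, f e ∉ S.image f → e ∈ A := by
      intro e he
      simp only [hAdef, Finset.mem_sdiff, Finset.mem_univ, true_and]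
      intro heS
      exact he (Finset.mem_image_of_mem f heS)
    have hvu : G.Adj v u := huv.symm
    set a1 : CE G := Sum.inl u
    set a2 : CE G := Sum.inr (⟨(u, v), huv⟩, true)
    set a2' : CE G := Sum.inr (⟨(u, v), huv⟩, false)
    set a3 : CE G := Sum.inl v
    set a4 : CE G := Sum.inr (⟨(v, u), hvu⟩, true)
    have ha1 : a1 ∈ A := hmem a1 hu
    have ha2 : a2 ∈ A := hmem a2 hu
    have ha2' : a2' ∈ A := hmem a2' hu
    have ha3 : a3 ∈ A := hmem a3 hv
    have ha4 : a4 ∈ A := hmem a4 hv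
    -- walk from (v, false) to (u, true)
    have hreach : Reach (cSrc G) (cTgt G) A ((v : V), false) (u, true) := by
      refine ⟨[a3, a4, a1], ?_⟩
      exact ⟨ha3, rfl, ha4, rfl, ha1, rfl, rfl⟩
    have hkey := hbal (u, true)
    have hge2 : ∀ (P : CE G → Prop) (inst : DecidablePred P),
        P a2 → P a2' → 2 ≤ (A.filter P).card := by
      intro P inst hp hp'
      have hsub : ({a2, a2'} : Finset (CE G)) ⊆ A.filter P := by
        intro e he
        simp only [Finset.mem_insert, Finset.mem_singleton] at he
        rcases he with rfl | rfl
        · exact Finset.mem_filter.2 ⟨ha2, hp⟩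
        · exact Finset.mem_filter.2 ⟨ha2', hp'⟩
      have hcard : ({a2, a2'} : Finset (CE G)).card = 2 := by
        rw [Finset.card_insert_of_notMem (by simp [a2, a2']), Finset.card_singleton]
      rw [← hcard]
      exact Finset.card_le_card hsub
    have hle1 : ∀ (P : CE G → Prop) (inst : DecidablePred P),
        (∀ e, P e → e = Sum.inl u) → (A.filter P).card ≤ 1 := by
      intro P inst h
      have hsub : A.filter P ⊆ {Sum.inl u} := by
        intro e he
        simp [h e (Finset.mem_filter.1 he).2]
      calc _ ≤ ({Sum.inl u} : Finset (CE G)).card := Finset.card_le_card hsub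
        _ = 1 := Finset.card_singleton _
    refine absurd hkey (ne_of_gt ?_)
    refine lt_of_le_of_lt (hle1 _ _ ?_) (lt_of_lt_of_le one_lt_two (hge2 _ _ ?_ ?_))
    · rintro e ⟨htgt, -⟩
      rcases e with w | ⟨⟨⟨x, y⟩, hxy⟩, b⟩
      · simp only [cTgt, Prod.mk.injEq] at htgt
        rw [htgt.1]
      · simp [cTgt] at htgt
    · exact ⟨rfl, hreach⟩
    · exact ⟨rfl, hreach⟩
end

section
/- Let F be a set of arcs in the digraph G' built from cubic graph G (vertices V(G) × {0,1}, internal arcs ((u,0),(u,1)), and two parallel cross arcs ((u,1),(v,0)) per edge uv of G) such that G' − F is acyclic. Then the set X = {u : ((u,0),(u,1)) ∈ F} ∪ {u : some copy of ((u,1),(v,0)) ∈ F for some v} is a vertex cover of G of size at most |F|. -/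
open scoped Classical

/-- The vertex of `G` associated with an arc of `G'`: the internal arc of `u` maps to
`u` and a cross arc `((u,1),(v,0))` maps to `u`. -/
def cover {V : Type} (G : SimpleGraph V) : CE G → V
  | Sum.inl u => u
  | Sum.inr (p, _) => p.1.1

/-- If deleting an arc set `F` from `G'` makes it acyclic, then
`X = {u : internal arc of u ∈ F} ∪ {u : some cross arc leaving (u,1) ∈ F}` is a vertex
cover of `G` of size at most `|F|`. -/
theorem stmt14 {V : Type} [Fintype V] [DecidableEq V] (G : SimpleGraph V)
    [DecidableRel G.Adj] (hcubic : ∀ v, G.degree v = 3) (F : Finset (CE G))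
    (hacyc : ∀ (p : V × Bool) (l : List (CE G)),
      IsWalk (cSrc G) (cTgt G) (Finset.univ \ F) l p p → l = []) :
    (F.image (cover G)).card ≤ F.card ∧
    ∀ u v, G.Adj u v → u ∈ F.image (cover G) ∨ v ∈ F.image (cover G) := by
  refine ⟨Finset.card_image_le, ?_⟩
  intro u v huv
  by_contra hcon
  push_neg at hcon
  obtain ⟨hu, hv⟩ := hcon
  have h1 : (Sum.inl u : CE G) ∉ F := fun h => hu (Finset.mem_image_of_mem _ h)
  have h2 : (Sum.inr (⟨(u,v), huv⟩, false) : CE G) ∉ F := fun h =>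
    hu (Finset.mem_image_of_mem _ h)
  have h3 : (Sum.inl v : CE G) ∉ F := fun h => hv (Finset.mem_image_of_mem _ h)
  have h4 : (Sum.inr (⟨(v,u), huv.symm⟩, false) : CE G) ∉ F := fun h =>
    hv (Finset.mem_image_of_mem _ h)
  have hw := hacyc (u, false)
    [Sum.inl u, Sum.inr (⟨(u,v), huv⟩, false), Sum.inl v, Sum.inr (⟨(v,u), huv.symm⟩, false)] ?_
  · simp at hw
  · refine ⟨Finset.mem_sdiff.mpr ⟨Finset.mem_univ _, h1⟩, rfl,
      Finset.mem_sdiff.mpr ⟨Finset.mem_univ _, h2⟩, rfl,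
      Finset.mem_sdiff.mpr ⟨Finset.mem_univ _, h3⟩, rfl,
      Finset.mem_sdiff.mpr ⟨Finset.mem_univ _, h4⟩, rfl, rfl⟩
end

section
/- Let X be a vertex cover of an undirected graph G, and let F = {((u,0),(u,1)) : u ∈ X} in the digraph G' with vertices V(G) × {0,1}, internal arcs ((u,0),(u,1)) for u ∈ V(G), and cross arcs ((u,1),(v,0)) and ((v,1),(u,0)) for each edge uv of G. Then G' − F is acyclic. -/
open scoped Classical

lemma key15 {V : Type} [Fintype V] [DecidableEq V] (G : SimpleGraph V)
    [DecidableRel G.Adj] (X : Finset V) (v : V) (hv : v ∈ X)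
    (l : List (CE G)) (q : V × Bool)
    (h : IsWalk (cSrc G) (cTgt G)
      (Finset.univ \ X.image fun u => (Sum.inl u : CE G)) l (v, false) q) :
    l = [] := by
  cases l with
  | nil => rfl
  | cons e l' =>
    obtain ⟨he, hs, _⟩ := h
    cases e with
    | inl u =>
      obtain rfl : u = v := by simpa [cSrc] using congrArg Prod.fst hs
      simp [Finset.mem_sdiff] at he
      exact absurd hv he
    | inr p =>
      simp [cSrc, Prod.ext_iff] at hs

/-- If `X` is a vertex cover of `G` and `F` is the set of internal arcs of vertices of
`X`, then `G' − F` is acyclic (it has no nonempty closed walk). -/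
theorem stmt15 {V : Type} [Fintype V] [DecidableEq V] (G : SimpleGraph V)
    [DecidableRel G.Adj] (X : Finset V)
    (hX : ∀ u v, G.Adj u v → u ∈ X ∨ v ∈ X) :
    ∀ (p : V × Bool) (l : List (CE G)),
      IsWalk (cSrc G) (cTgt G)
        (Finset.univ \ X.image fun u => (Sum.inl u : CE G)) l p p → l = [] := by
  intro p l h
  cases l with
  | nil => rfl
  | cons e l' =>
    exfalso
    obtain ⟨he, hs, h'⟩ := h
    cases e with
    | inl u =>
      -- internal edge first: p = (u,false), u ∉ X
      subst hs
      have hu : u ∉ X := by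
        simp [Finset.mem_sdiff] at he; exact he
      cases l' with
      | nil => simp [cSrc, cTgt, IsWalk, Prod.ext_iff] at h'
      | cons f l'' =>
        obtain ⟨hf, hfs, h''⟩ := h'
        cases f with
        | inl w => simp [cSrc, cTgt, Prod.ext_iff] at hfs
        | inr q =>
          obtain ⟨⟨⟨a, b⟩, hadj⟩, bb⟩ := q
          have hab : a = u := by simpa [cSrc, cTgt] using congrArg Prod.fst hfs
          subst hab
          have hbX : b ∈ X := (hX a b hadj).resolve_left hu
          have := key15 G X b hbX l'' _ h''
          subst this
          have : (b, false) = cSrc G (Sum.inl a) := h''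
          have hba : b = a := by simpa [cSrc] using congrArg Prod.fst this
          exact G.irrefl (hba ▸ hadj)
    | inr q =>
      obtain ⟨⟨⟨a, b⟩, hadj⟩, bb⟩ := q
      -- p = (a, true), walk l' from (b,false) to (a,true)
      subst hs
      have hb : b ∉ X := by
        intro hbX
        have := key15 G X b hbX l' _ h'
        subst this
        simp [cSrc, cTgt, IsWalk, Prod.ext_iff] at h'
      have ha : a ∈ X := (hX a b hadj).resolve_right hb
      cases l' with
      | nil => simp [cSrc, cTgt, IsWalk, Prod.ext_iff] at h'
      | cons f l'' =>
        obtain ⟨hf, hfs, h''⟩ := h'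
        cases f with
        | inl w =>
          have hwb : w = b := by simpa [cSrc, cTgt] using congrArg Prod.fst hfs
          subst hwb
          cases l'' with
          | nil =>
            have : (w, true) = (a, true) := h''
            have : w = a := by simpa using congrArg Prod.fst this
            subst this
            exact hb ha
          | cons g l''' =>
            obtain ⟨hg, hgs, h'''⟩ := h''
            cases g with
            | inl x => simp [cSrc, cTgt, Prod.ext_iff] at hgs
            | inr r =>
              obtain ⟨⟨⟨c, d⟩, hadj2⟩, bb2⟩ := r
              have hcw : c = w := by simpa [cSrc, cTgt] using congrArg Prod.fst hgs
              have hwX : w ∉ X := by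
                simp [Finset.mem_sdiff] at hf; exact hf
              have hdX : d ∈ X := (hX c d hadj2).resolve_left (hcw ▸ hwX)
              have := key15 G X d hdX l''' _ h'''
              subst this
              simp [cSrc, cTgt, IsWalk, Prod.ext_iff] at h'''
        | inr r => simp [cSrc, cTgt, Prod.ext_iff] at hfs
end
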